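/- Let a₀^i, a₁^i ∈ ℝ³ be unit vectors for i = 1,...,n with n even, and define v₀^n = Σ_{x∈{0,1}^n} (−1)^⌊w(x)/2⌋ ⊗_i a_{x_i}^i and v₁^n = Σ_{x∈{0,1}^n} (−1)^⌈w(x)/2⌉ ⊗_i a_{x_i}^i. Then ‖v₀^n‖² = ‖v₁^n‖² = 2^n. -/

import Mathlib

open scoped RealInnerProductSpace

/-- Hamming weight of a bit string. -/
def hammingWeight {n : ℕ} (x : Fin n → Bool) : ℕ :=
  (Finset.univ.filter fun i => x i = true).card

/-- Kronecker (tensor) product of `n` vectors in `ℝ³`, realized as a vector in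
`ℝ^{3^n}` indexed by `Fin n → Fin 3`. -/
noncomputable def tensorVec {n : ℕ} (a : Fin n → EuclideanSpace ℝ (Fin 3)) :
    EuclideanSpace ℝ (Fin n → Fin 3) :=
  WithLp.toLp 2 fun f => ∏ i, a i (f i)

private lemma lemA (w : ℕ) : ((-1:ℝ))^(w/2) = (Complex.I^w).re + (Complex.I^w).im := by
  have h2 : w / 2 = 2 * (w/4) + (w % 4)/2 := by omega
  have hI : Complex.I ^ w = Complex.I ^ (w % 4) := by
    conv_lhs => rw [(Nat.div_add_mod w 4).symm]
    rw [pow_add, pow_mul]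
    norm_num
  have h4 : w % 4 < 4 := Nat.mod_lt _ (by norm_num)
  rw [h2, hI, pow_add, pow_mul]
  norm_num
  interval_cases h : w % 4 <;> norm_num [pow_succ, Complex.I_mul_I]

private lemma lemB (w : ℕ) : ((-1:ℝ))^((w+1)/2) = (Complex.I^w).re - (Complex.I^w).im := by
  have h2 : (w+1) / 2 = 2 * (w/4) + (w % 4 + 1)/2 := by omega
  have hI : Complex.I ^ w = Complex.I ^ (w % 4) := by
    conv_lhs => rw [(Nat.div_add_mod w 4).symm]
    rw [pow_add, pow_mul]
    norm_num
  have h4 : w % 4 < 4 := Nat.mod_lt _ (by norm_num)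
  rw [h2, hI, pow_add, pow_mul]
  norm_num
  interval_cases h : w % 4 <;> norm_num [pow_succ, Complex.I_mul_I]

private lemma negI_pow (v : ℕ) : ((-Complex.I)^v).re = (Complex.I^v).re ∧ ((-Complex.I)^v).im = -(Complex.I^v).im := by
  have : (-Complex.I)^v = (starRingEnd ℂ) (Complex.I^v) := by
    rw [map_pow, Complex.conj_I]
  rw [this, Complex.conj_re, Complex.conj_im]
  exact ⟨rfl, rfl⟩

private lemma pair0 (u v : ℕ) : ((-1:ℝ)^(u/2)) * ((-1:ℝ)^(v/2)) =
    (Complex.I^u * (-Complex.I)^v).re + (Complex.I^u * Complex.I^v).im := by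
  rw [lemA u, lemA v, Complex.mul_re, Complex.mul_im, (negI_pow v).1, (negI_pow v).2]
  ring

private lemma pair1 (u v : ℕ) : ((-1:ℝ)^((u+1)/2)) * ((-1:ℝ)^((v+1)/2)) =
    (Complex.I^u * (-Complex.I)^v).re - (Complex.I^u * Complex.I^v).im := by
  rw [lemB u, lemB v, Complex.mul_re, Complex.mul_im, (negI_pow v).1, (negI_pow v).2]
  ring

private lemma inner_tensorVec {n : ℕ} (a b : Fin n → EuclideanSpace ℝ (Fin 3)) :
    ⟪tensorVec a, tensorVec b⟫ = ∏ i, ⟪a i, b i⟫ := by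
  simp only [tensorVec, PiLp.inner_apply, PiLp.toLp_apply, RCLike.inner_apply, conj_trivial]
  rw [Finset.prod_univ_sum]
  simp [← Finset.prod_mul_distrib]

private lemma factor_sum {n : ℕ} (g : Fin n → Bool → Bool → ℂ) :
    (∑ x : Fin n → Bool, ∑ y : Fin n → Bool, ∏ i, g i (x i) (y i)) =
    ∏ i, ∑ b : Bool, ∑ b' : Bool, g i b b' := by
  have h1 : ∀ i, (∑ b : Bool, ∑ b' : Bool, g i b b') = ∑ p : Bool × Bool, g i p.1 p.2 :=
    fun i => by rw [← Fintype.sum_prod_type']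
  simp_rw [h1]
  rw [Finset.prod_univ_sum]
  simp only [Fintype.piFinset_univ]
  rw [← Fintype.sum_prod_type']
  exact Fintype.sum_equiv (Equiv.arrowProdEquivProdArrow (Fin n) (fun _ => Bool) (fun _ => Bool)).symm _ _
    (fun h => rfl)

private lemma hamming_eq_sum {n : ℕ} (x : Fin n → Bool) :
    hammingWeight x = ∑ i, (if x i then 1 else 0) := by
  rw [hammingWeight, Finset.card_filter]

private lemma prod_split {n : ℕ} (c : Fin n → Bool → Bool → ℝ) (z w : ℂ) (x y : Fin n → Bool) :
    (∏ i, z ^ (if x i then 1 else 0) * w ^ (if y i then 1 else 0) * (c i (x i) (y i) : ℂ))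
    = z ^ (hammingWeight x) * w ^ (hammingWeight y) * ((∏ i, c i (x i) (y i) : ℝ) : ℂ) := by
  rw [Finset.prod_mul_distrib, Finset.prod_mul_distrib, Finset.prod_pow_eq_pow_sum,
    Finset.prod_pow_eq_pow_sum, ← hamming_eq_sum, ← hamming_eq_sum, Complex.ofReal_prod]

private lemma scalar_key (n : ℕ) (hn : Even n) (c : Fin n → Bool → Bool → ℝ)
    (h00 : ∀ i, c i false false = 1) (h11 : ∀ i, c i true true = 1)
    (hsy : ∀ i, c i false true = c i true false) :
    (∑ x : Fin n → Bool, ∑ y : Fin n → Bool,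
        (-1:ℝ)^(hammingWeight x / 2) * (-1:ℝ)^(hammingWeight y / 2) * ∏ i, c i (x i) (y i)) = 2^n ∧
    (∑ x : Fin n → Bool, ∑ y : Fin n → Bool,
        (-1:ℝ)^((hammingWeight x + 1) / 2) * (-1:ℝ)^((hammingWeight y + 1) / 2) * ∏ i, c i (x i) (y i)) = 2^n := by
  set g3 : Fin n → Bool → Bool → ℂ := fun i b b' =>
    Complex.I ^ (if b then 1 else 0) * (-Complex.I) ^ (if b' then 1 else 0) * (c i b b' : ℂ) with hg3
  set g1 : Fin n → Bool → Bool → ℂ := fun i b b' =>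
    Complex.I ^ (if b then 1 else 0) * Complex.I ^ (if b' then 1 else 0) * (c i b b' : ℂ) with hg1
  have hZ3 : (∑ x : Fin n → Bool, ∑ y : Fin n → Bool, ∏ i, g3 i (x i) (y i)) = ((2:ℝ)^n : ℂ) := by
    rw [factor_sum]
    have h : ∀ i : Fin n, (∑ b : Bool, ∑ b' : Bool, g3 i b b') = 2 := by
      intro i
      simp only [hg3, Fintype.sum_bool, if_true, if_false, pow_one, pow_zero,
        h00 i, h11 i, hsy i]
      push_cast
      ring_nf
      rw [Complex.I_sq]
      norm_num
    simp_rw [h]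
    rw [Finset.prod_const, Finset.card_univ, Fintype.card_fin]
    push_cast
    ring
  have hZ1 : (∑ x : Fin n → Bool, ∑ y : Fin n → Bool, ∏ i, g1 i (x i) (y i)).im = 0 := by
    rw [factor_sum]
    have h : ∀ i : Fin n, (∑ b : Bool, ∑ b' : Bool, g1 i b b')
        = 2 * Complex.I * (c i true false : ℂ) := by
      intro i
      simp only [hg1, Fintype.sum_bool, if_true, if_false, pow_one, pow_zero,
        h00 i, h11 i, hsy i]
      push_cast
      simp only [pow_zero, one_mul, mul_one, Complex.I_mul_I]
      ring
    simp_rw [h]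
    obtain ⟨m, rfl⟩ := hn
    rw [Finset.prod_mul_distrib, Finset.prod_const, Finset.card_univ, Fintype.card_fin,
      ← Complex.ofReal_prod]
    have h2I : ((2:ℂ) * Complex.I)^(m+m) = (((-4:ℝ)^m : ℝ) : ℂ) := by
      rw [← two_mul, pow_mul]
      have : ((2:ℂ) * Complex.I)^2 = -4 := by
        rw [mul_pow, Complex.I_sq]; norm_num
      rw [this]
      push_cast
      ring
    rw [h2I, ← Complex.ofReal_mul]
    exact Complex.ofReal_im _
  constructor
  · have expand : ∀ x y : Fin n → Bool,
        (-1:ℝ)^(hammingWeight x / 2) * (-1:ℝ)^(hammingWeight y / 2) * ∏ i, c i (x i) (y i)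
        = (∏ i, g3 i (x i) (y i)).re + (∏ i, g1 i (x i) (y i)).im := by
      intro x y
      simp only [hg3, hg1]
      rw [prod_split, prod_split, pair0 (hammingWeight x) (hammingWeight y)]
      simp only [Complex.mul_re, Complex.mul_im, Complex.ofReal_re, Complex.ofReal_im]
      ring
    simp_rw [expand]
    have hsplit : (∑ x : Fin n → Bool, ∑ y : Fin n → Bool,
        ((∏ i, g3 i (x i) (y i)).re + (∏ i, g1 i (x i) (y i)).im))
        = (∑ x : Fin n → Bool, ∑ y : Fin n → Bool, ∏ i, g3 i (x i) (y i)).re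
        + (∑ x : Fin n → Bool, ∑ y : Fin n → Bool, ∏ i, g1 i (x i) (y i)).im := by
      simp [Complex.re_sum, Complex.im_sum, Finset.sum_add_distrib]
    rw [hsplit, hZ3, hZ1]
    norm_cast
  · have expand : ∀ x y : Fin n → Bool,
        (-1:ℝ)^((hammingWeight x + 1) / 2) * (-1:ℝ)^((hammingWeight y + 1) / 2) * ∏ i, c i (x i) (y i)
        = (∏ i, g3 i (x i) (y i)).re - (∏ i, g1 i (x i) (y i)).im := by
      intro x y
      simp only [hg3, hg1]
      rw [prod_split, prod_split, pair1 (hammingWeight x) (hammingWeight y)]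
      simp only [Complex.mul_re, Complex.mul_im, Complex.ofReal_re, Complex.ofReal_im]
      ring
    simp_rw [expand]
    have hsplit : (∑ x : Fin n → Bool, ∑ y : Fin n → Bool,
        ((∏ i, g3 i (x i) (y i)).re - (∏ i, g1 i (x i) (y i)).im))
        = (∑ x : Fin n → Bool, ∑ y : Fin n → Bool, ∏ i, g3 i (x i) (y i)).re
        - (∑ x : Fin n → Bool, ∑ y : Fin n → Bool, ∏ i, g1 i (x i) (y i)).im := by
      simp [Complex.re_sum, Complex.im_sum, Finset.sum_sub_distrib]
    rw [hsplit, hZ3, hZ1, sub_zero]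
    norm_cast

/-- For even `n` and unit vectors `a₀^i, a₁^i ∈ ℝ³`, the vectors
`v₀ = Σ_x (−1)^⌊w(x)/2⌋ ⊗ᵢ a_{xᵢ}^i` and `v₁ = Σ_x (−1)^⌈w(x)/2⌉ ⊗ᵢ a_{xᵢ}^i`
satisfy `‖v₀‖² = ‖v₁‖² = 2^n`. -/
theorem norm_sq_v0_eq_norm_sq_v1_even (n : ℕ) (hn : Even n)
    (a0 a1 : Fin n → EuclideanSpace ℝ (Fin 3))
    (ha0 : ∀ i, ‖a0 i‖ = 1) (ha1 : ∀ i, ‖a1 i‖ = 1) :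
    ‖∑ x : Fin n → Bool, ((-1 : ℝ) ^ (hammingWeight x / 2)) •
        tensorVec (fun i => if x i then a1 i else a0 i)‖ ^ 2 = 2 ^ n ∧
    ‖∑ x : Fin n → Bool, ((-1 : ℝ) ^ ((hammingWeight x + 1) / 2)) •
        tensorVec (fun i => if x i then a1 i else a0 i)‖ ^ 2 = 2 ^ n := by
  classical
  have key := scalar_key n hn
    (fun i b b' => inner ℝ (if b then a1 i else a0 i : EuclideanSpace ℝ (Fin 3))
      (if b' then a1 i else a0 i))
    (fun i => by
      show (inner ℝ (a0 i) (a0 i) : ℝ) = 1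
      rw [real_inner_self_eq_norm_sq, ha0 i]; norm_num)
    (fun i => by
      show (inner ℝ (a1 i) (a1 i) : ℝ) = 1
      rw [real_inner_self_eq_norm_sq, ha1 i]; norm_num)
    (fun i => by exact real_inner_comm _ _)
  have expand : ∀ ε : ℕ → ℝ,
      ‖∑ x : Fin n → Bool, (ε (hammingWeight x)) •
          tensorVec (fun i => if x i then a1 i else a0 i)‖ ^ 2
      = ∑ x : Fin n → Bool, ∑ y : Fin n → Bool,
          ε (hammingWeight x) * ε (hammingWeight y) *
            ∏ i, (inner ℝ (if x i then a1 i else a0 i : EuclideanSpace ℝ (Fin 3))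
              (if y i then a1 i else a0 i) : ℝ) := by
    intro ε
    rw [← real_inner_self_eq_norm_sq, sum_inner]
    refine Finset.sum_congr rfl fun x _ => ?_
    rw [real_inner_smul_left, inner_sum, Finset.mul_sum]
    refine Finset.sum_congr rfl fun y _ => ?_
    rw [real_inner_smul_right, inner_tensorVec]
    ring
  exact ⟨(expand (fun w => (-1:ℝ)^(w/2))).trans key.1,
    (expand (fun w => (-1:ℝ)^((w+1)/2))).trans key.2⟩
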